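/- arXiv:2201.07176 — 3 statements merged into one kernel-verified Lean document; each statement's English description precedes it below -/
import Mathlib

section
/- For all integers n ≥ 1, 1 ≤ k ≤ n, and all integers m (positive, zero, or negative), the rational number w_k = ((-1)^(n-k)/(n-1)!) · C(n-1, k-1) · ∏_{j=0, j≠k-1}^{n-1} (m - j) is an integer. -/
open Finset Polynomial

lemma prod_range_sub_eq_descPochhammer (r : ℕ) (t : ℤ) :
    ∏ j ∈ Finset.range r, (t - j) = (descPochhammer ℤ r).eval t := by
  induction r with
  | zero => simp
  | succ r ih => rw [Finset.prod_range_succ, ih, descPochhammer_succ_eval]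

lemma factorial_dvd_prod_range_sub (r : ℕ) (t : ℤ) :
    (r.factorial : ℤ) ∣ ∏ j ∈ Finset.range r, (t - j) := by
  rw [prod_range_sub_eq_descPochhammer, Polynomial.eval_eq_smeval,
    Ring.descPochhammer_eq_factorial_smul_choose]
  exact ⟨Ring.choose t r, by simp [nsmul_eq_mul]⟩

theorem stmt1 (n k : ℕ) (m : ℤ) (hn : 1 ≤ n) (hk1 : 1 ≤ k) (hkn : k ≤ n) :
    ∃ z : ℤ,
      ((-1 : ℚ) ^ (n - k) / (n - 1).factorial) * ((n - 1).choose (k - 1)) *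
          ∏ j ∈ (Finset.range n).erase (k - 1), ((m : ℚ) - (j : ℚ)) = (z : ℚ) := by
  set i := k - 1 with hi
  have hsplit : (Finset.range n).erase i = Finset.range i ∪ Finset.Ico (i + 1) n := by
    ext x
    simp only [Finset.mem_erase, Finset.mem_range, Finset.mem_union, Finset.mem_Ico]
    omega
  have hdisj : Disjoint (Finset.range i) (Finset.Ico (i + 1) n) := by
    rw [Finset.disjoint_left]
    intro x hx hx'
    simp only [Finset.mem_range] at hx
    simp only [Finset.mem_Ico] at hx'
    omega
  -- integer versions of the two sub-products
  obtain ⟨a, ha⟩ := factorial_dvd_prod_range_sub i m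
  have hB : ((n - k).factorial : ℤ) ∣ ∏ j ∈ Finset.Ico (i + 1) n, (m - j) := by
    rw [Finset.prod_Ico_eq_prod_range]
    have : ∀ j ∈ Finset.range (n - (i + 1)), (m - (↑(i + 1 + j)) : ℤ) = (m - (i + 1)) - j := by
      intro j _; push_cast; ring
    rw [Finset.prod_congr rfl this]
    have hnk : n - k = n - (i + 1) := by omega
    rw [hnk]
    exact factorial_dvd_prod_range_sub _ _
  obtain ⟨b, hb⟩ := hB
  refine ⟨(-1) ^ (n - k) * a * b, ?_⟩
  -- rewrite the rational product as a cast of an integer product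
  have hprodQ : ∏ j ∈ (Finset.range n).erase i, ((m : ℚ) - (j : ℚ)) =
      ((∏ j ∈ Finset.range i, (m - j) : ℤ) : ℚ) *
        ((∏ j ∈ Finset.Ico (i + 1) n, (m - j) : ℤ) : ℚ) := by
    rw [hsplit, Finset.prod_union hdisj]
    push_cast
    rfl
  have hchoose : ((n - 1).choose i) * i.factorial * (n - k).factorial = (n - 1).factorial := by
    have h1 : i ≤ n - 1 := by omega
    have h2 : n - 1 - i = n - k := by omega
    have := Nat.choose_mul_factorial_mul_factorial h1
    rw [h2] at this
    exact this
  have hfq : ((n - 1).factorial : ℚ) ≠ 0 := by positivity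
  rw [hprodQ, ha, hb]
  push_cast
  rw [div_mul_eq_mul_div, div_mul_eq_mul_div, div_eq_iff hfq]
  have hcq : (((n - 1).choose i : ℚ)) * (i.factorial : ℚ) * ((n - k).factorial : ℚ)
      = ((n - 1).factorial : ℚ) := by
    exact_mod_cast congrArg (Nat.cast : ℕ → ℚ) hchoose
  calc (-1 : ℚ) ^ (n - k) * ((n - 1).choose i) * ((i.factorial : ℚ) * a * ((n - k).factorial * b))
      = ((-1 : ℚ) ^ (n - k) * a * b) * (((n - 1).choose i : ℚ) * (i.factorial : ℚ) * ((n - k).factorial : ℚ)) := by ring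
    _ = ((-1 : ℚ) ^ (n - k) * a * b) * ((n - 1).factorial : ℚ) := by rw [hcq]
end

section
/- For a negative integer m = -q with q > 0, and 1 ≤ k ≤ n, one has ∏_{j=0, j≠k-1}^{n-1} (-q - j) = (-1)^(n-1) · C(q+k-2, q-1) · (k-1)! · C(q+n-1, q+k-1) · (n-k)!. -/
lemma prod_range_add_eq_asc (q n : ℕ) :
    ∏ j ∈ Finset.range n, (q + j) = q.ascFactorial n := by
  induction n with
  | zero => simp
  | succ n ih => rw [Finset.prod_range_succ, ih, Nat.ascFactorial_succ, mul_comm]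

theorem stmt2 (n k q : ℕ) (hq : 1 ≤ q) (hk1 : 1 ≤ k) (hkn : k ≤ n) :
    ∏ j ∈ (Finset.range n).erase (k - 1), (-(q : ℤ) - (j : ℤ))
      = (-1 : ℤ) ^ (n - 1) * ((q + k - 2).choose (q - 1)) * (k - 1).factorial *
          ((q + n - 1).choose (q + k - 1)) * (n - k).factorial := by
  have hmem : k - 1 ∈ Finset.range n := Finset.mem_range.2 (by omega)
  have hcard : ((Finset.range n).erase (k - 1)).card = n - 1 := by
    rw [Finset.card_erase_of_mem hmem, Finset.card_range]
  -- Natural number identity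
  have hnat : (q + k - 1) * ∏ j ∈ (Finset.range n).erase (k - 1), (q + j)
      = q.ascFactorial n := by
    rw [← prod_range_add_eq_asc, ← Finset.prod_erase_mul _ _ hmem, mul_comm]
    congr 1
    omega
  have key : ∏ j ∈ (Finset.range n).erase (k - 1), (q + j)
      = (q + k - 2).choose (q - 1) * (k - 1).factorial *
          ((q + n - 1).choose (q + k - 1)) * (n - k).factorial := by
    have hpos : 0 < (q - 1).factorial * (q + k - 1) :=
      Nat.mul_pos (Nat.factorial_pos _) (by omega)
    apply Nat.eq_of_mul_eq_mul_left hpos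
    have hfa : (q - 1).factorial * q.ascFactorial n = (q + n - 1).factorial := by
      have := Nat.factorial_mul_ascFactorial (q - 1) n
      have h1 : q - 1 + 1 = q := by omega
      have h2 : q - 1 + n = q + n - 1 := by omega
      rw [h1, h2] at this
      exact this
    have h3 : (q + k - 2).choose (q - 1) * (q - 1).factorial * (k - 1).factorial
        = (q + k - 2).factorial := by
      have := Nat.choose_mul_factorial_mul_factorial
        (show q - 1 ≤ q + k - 2 by omega)
      have h4 : q + k - 2 - (q - 1) = k - 1 := by omega
      rw [h4] at this
      exact this
    have h5 : (q + n - 1).choose (q + k - 1) * (q + k - 1).factorial * (n - k).factorial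
        = (q + n - 1).factorial := by
      have := Nat.choose_mul_factorial_mul_factorial
        (show q + k - 1 ≤ q + n - 1 by omega)
      have h6 : q + n - 1 - (q + k - 1) = n - k := by omega
      rw [h6] at this
      exact this
    have h7 : (q + k - 1) * (q + k - 2).factorial = (q + k - 1).factorial := by
      have : q + k - 1 = (q + k - 2) + 1 := by omega
      rw [this, Nat.factorial_succ]
    calc (q - 1).factorial * (q + k - 1) *
          ∏ j ∈ (Finset.range n).erase (k - 1), (q + j)
        = (q - 1).factorial * ((q + k - 1) *
          ∏ j ∈ (Finset.range n).erase (k - 1), (q + j)) := by ring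
      _ = (q + n - 1).factorial := by rw [hnat, hfa]
      _ = (q + k - 1) * (q + k - 2).factorial *
            ((q + n - 1).choose (q + k - 1) * (n - k).factorial) := by
          rw [h7]
          rw [← h5]; ring
      _ = (q + k - 1) * ((q + k - 2).choose (q - 1) * (q - 1).factorial * (k - 1).factorial) *
            ((q + n - 1).choose (q + k - 1) * (n - k).factorial) := by rw [h3]
      _ = (q - 1).factorial * (q + k - 1) *
          ((q + k - 2).choose (q - 1) * (k - 1).factorial *
            ((q + n - 1).choose (q + k - 1)) * (n - k).factorial) := by ring
  have step1 : ∏ j ∈ (Finset.range n).erase (k - 1), (-(q : ℤ) - (j : ℤ))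
      = (-1 : ℤ) ^ (n - 1) * ∏ j ∈ (Finset.range n).erase (k - 1), ((q : ℤ) + j) := by
    rw [← hcard, ← Finset.prod_const, ← Finset.prod_mul_distrib]
    apply Finset.prod_congr rfl
    intro j _
    ring
  rw [step1]
  have : (∏ j ∈ (Finset.range n).erase (k - 1), ((q : ℤ) + j))
      = ((∏ j ∈ (Finset.range n).erase (k - 1), (q + j) : ℕ) : ℤ) := by
    push_cast
    rfl
  rw [this, key]
  push_cast
  ring
end

section
/- For every integer m and every n ≥ 0, the system of linear equations ∑_{j=0}^{n} j^i · a_j = m^i for i = 0, 1, ..., n (with the convention 0^0 = 1) has a unique rational solution (a_0, ..., a_n), and this solution consists of integers. -/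
open Finset Polynomial Nat Matrix

private lemma fact_dvd_prod (k : ℕ) (x : ℤ) :
    ((k ! : ℕ) : ℤ) ∣ ∏ i ∈ range k, (x - (i : ℤ)) := by
  have h : ∏ i ∈ range k, (x - (i : ℤ)) = (descPochhammer ℤ k).eval x := by
    induction k with
    | zero => simp
    | succ k ih =>
        rw [prod_range_succ, ih, descPochhammer_succ_right, eval_mul]
        simp
  rw [h, Polynomial.eval_eq_smeval, Ring.descPochhammer_eq_factorial_smul_choose]
  exact Dvd.intro _ (by rw [nsmul_eq_mul])

private lemma erase_split (n j : ℕ) (hj : j < n + 1) :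
    (range (n + 1)).erase j = range j ∪ Ico (j + 1) (n + 1) := by
  ext k
  simp only [mem_erase, mem_range, mem_union, mem_Ico]
  omega

private lemma key_dvd (n : ℕ) (m : ℤ) (j : ℕ) (hj : j < n + 1) :
    (∏ k ∈ (range (n + 1)).erase j, ((j : ℤ) - (k : ℤ))) ∣
      ∏ k ∈ (range (n + 1)).erase j, (m - (k : ℤ)) := by
  have hdisj : Disjoint (range j) (Ico (j + 1) (n + 1)) := by
    rw [Finset.disjoint_left]
    intro a ha hb
    simp only [mem_range] at ha
    simp only [mem_Ico] at hb
    omega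
  rw [erase_split n j hj, prod_union hdisj, prod_union hdisj]
  -- second blocks as range products
  have hIco : ∀ x : ℤ, ∏ k ∈ Ico (j + 1) (n + 1), (x - (k : ℤ)) =
      ∏ t ∈ range (n - j), ((x - (j : ℤ) - 1) - (t : ℤ)) := by
    intro x
    rw [Finset.prod_Ico_eq_prod_range]
    have he : n + 1 - (j + 1) = n - j := by omega
    rw [he]
    apply Finset.prod_congr rfl
    intro t _
    push_cast
    ring
  have hD1 : ∏ k ∈ range j, ((j : ℤ) - (k : ℤ)) = (j ! : ℤ) := by
    have : ∏ k ∈ range j, ((j : ℤ) - (k : ℤ)) = ∏ k ∈ range j, (((j - k : ℕ)) : ℤ) := by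
      apply Finset.prod_congr rfl
      intro k hk
      simp only [mem_range] at hk
      have : k ≤ j := hk.le
      push_cast [this]
      ring
    rw [this, ← Nat.cast_prod]
    congr 1
    calc ∏ k ∈ range j, (j - k) = ∏ k ∈ range j, ((fun i => i + 1) (j - 1 - k)) := by
          apply Finset.prod_congr rfl
          intro k hk
          simp only [mem_range] at hk
          show j - k = j - 1 - k + 1
          omega
      _ = ∏ k ∈ range j, (k + 1) := Finset.prod_range_reflect (fun i => i + 1) j
      _ = j ! := Finset.prod_range_add_one_eq_factorial j
  have hD2 : ∏ k ∈ Ico (j + 1) (n + 1), ((j : ℤ) - (k : ℤ)) =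
      (-1) ^ (n - j) * ((n - j)! : ℤ) := by
    rw [hIco]
    calc ∏ t ∈ range (n - j), (((j : ℤ) - (j : ℤ) - 1) - (t : ℤ))
        = ∏ t ∈ range (n - j), (-1) * ((t : ℤ) + 1) := by
          apply Finset.prod_congr rfl; intro t _; ring
      _ = (-1) ^ (n - j) * ∏ t ∈ range (n - j), ((t : ℤ) + 1) := by
          rw [Finset.prod_mul_distrib, Finset.prod_const, Finset.card_range]
      _ = (-1) ^ (n - j) * ((n - j)! : ℤ) := by
          congr 1
          rw [← Finset.prod_range_add_one_eq_factorial (n - j)]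
          push_cast
          ring
  rw [hD1, hD2]
  have h1 : ((j ! : ℕ) : ℤ) ∣ ∏ k ∈ range j, (m - (k : ℤ)) := fact_dvd_prod j m
  have h2 : (((n - j)! : ℕ) : ℤ) ∣ ∏ k ∈ Ico (j + 1) (n + 1), (m - (k : ℤ)) := by
    rw [hIco]
    exact fact_dvd_prod (n - j) (m - j - 1)
  have hu : ((-1 : ℤ) ^ (n - j)) * ((-1 : ℤ) ^ (n - j)) = 1 := by
    rw [← pow_add]
    exact Even.neg_one_pow ⟨n - j, rfl⟩
  have : (j ! : ℤ) * ((-1) ^ (n - j) * ((n - j)! : ℤ)) ∣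
      (j ! : ℤ) * ((n - j)! : ℤ) := by
    refine ⟨(-1) ^ (n - j), ?_⟩
    have h13 : (j ! : ℤ) * ((-1) ^ (n - j) * ((n - j)! : ℤ)) * (-1) ^ (n - j)
        = (j ! : ℤ) * ((n - j)! : ℤ) * ((-1) ^ (n - j) * (-1) ^ (n - j)) := by ring
    rw [h13, hu, mul_one]
  exact this.trans (mul_dvd_mul h1 h2)

theorem stmt5 (n : ℕ) (m : ℤ) :
    (∃! a : Fin (n + 1) → ℚ,
        ∀ i : Fin (n + 1), ∑ j : Fin (n + 1), ((j : ℕ) : ℚ) ^ (i : ℕ) * a j = (m : ℚ) ^ (i : ℕ)) ∧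
    ∀ a : Fin (n + 1) → ℚ,
      (∀ i : Fin (n + 1), ∑ j : Fin (n + 1), ((j : ℕ) : ℚ) ^ (i : ℕ) * a j = (m : ℚ) ^ (i : ℕ)) →
      ∀ j : Fin (n + 1), ∃ z : ℤ, a j = (z : ℚ) := by
  classical
  set v : Fin (n + 1) → ℚ := fun j => ((j : ℕ) : ℚ) with hv
  have hvinj : Function.Injective v := by
    intro a b hab
    have h2 : ((a : ℕ) : ℚ) = ((b : ℕ) : ℚ) := hab
    exact Fin.val_injective (Nat.cast_injective h2)
  have hinjOn : Set.InjOn v (Finset.univ : Finset (Fin (n + 1))) := hvinj.injOn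
  -- uniqueness via Vandermonde
  have huniq : ∀ a b : Fin (n + 1) → ℚ,
      (∀ i : Fin (n + 1), ∑ j : Fin (n + 1), ((j : ℕ) : ℚ) ^ (i : ℕ) * a j = (m : ℚ) ^ (i : ℕ)) →
      (∀ i : Fin (n + 1), ∑ j : Fin (n + 1), ((j : ℕ) : ℚ) ^ (i : ℕ) * b j = (m : ℚ) ^ (i : ℕ)) →
      a = b := by
    intro a b ha hb
    set M : Matrix (Fin (n + 1)) (Fin (n + 1)) ℚ := (Matrix.vandermonde v)ᵀ with hM
    have hdet : M.det ≠ 0 := by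
      rw [hM, Matrix.det_transpose]
      exact Matrix.det_vandermonde_ne_zero_iff.mpr hvinj
    have hMinj : Function.Injective M.mulVec :=
      Matrix.mulVec_injective_iff_isUnit.mpr
        ((Matrix.isUnit_iff_isUnit_det M).mpr (isUnit_iff_ne_zero.mpr hdet))
    apply hMinj
    funext i
    simp only [Matrix.mulVec, dotProduct, hM, Matrix.transpose_apply,
      Matrix.vandermonde_apply]
    rw [ha i, hb i]
  -- existence via Lagrange interpolation
  set a : Fin (n + 1) → ℚ :=
    fun j => (Lagrange.basis Finset.univ v j).eval (m : ℚ) with ha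
  have hsol : ∀ i : Fin (n + 1),
      ∑ j : Fin (n + 1), ((j : ℕ) : ℚ) ^ (i : ℕ) * a j = (m : ℚ) ^ (i : ℕ) := by
    intro i
    have hdeg : (X ^ (i : ℕ) : ℚ[X]).degree < (Finset.univ : Finset (Fin (n + 1))).card := by
      rw [degree_X_pow]
      simp only [Finset.card_univ, Fintype.card_fin]
      exact_mod_cast Nat.lt_of_lt_of_le i.isLt (le_refl _)
    have h := Lagrange.eq_interpolate hinjOn hdeg
    have := congrArg (Polynomial.eval (m : ℚ)) h
    rw [eval_pow, eval_X] at this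
    rw [this, Lagrange.interpolate_apply, eval_finset_sum]
    apply Finset.sum_congr rfl
    intro j _
    rw [eval_mul, eval_C, eval_pow, eval_X]
  refine ⟨⟨a, hsol, fun b hb => huniq b a hb hsol⟩, ?_⟩
  intro b hb j
  have hba : b = a := huniq b a hb hsol
  subst hba
  -- integrality of a j
  set N : ℤ := ∏ k ∈ (range (n + 1)).erase (j : ℕ), (m - (k : ℤ)) with hN
  set D : ℤ := ∏ k ∈ (range (n + 1)).erase (j : ℕ), (((j : ℕ) : ℤ) - (k : ℤ)) with hD
  have hdvd : D ∣ N := key_dvd n m j j.isLt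
  refine ⟨N / D, ?_⟩
  have hDne : D ≠ 0 := by
    rw [hD]
    apply Finset.prod_ne_zero_iff.mpr
    intro k hk h
    rw [mem_erase, mem_range] at hk
    exact hk.1 (by omega)
  -- transfer Fin product to range product
  have hbij : ∀ f : ℕ → ℚ, ∏ k ∈ (Finset.univ : Finset (Fin (n+1))).erase j, f (k : ℕ) =
      ∏ k ∈ (range (n + 1)).erase (j : ℕ), f k := by
    intro f
    refine Finset.prod_nbij (fun k => (k : ℕ)) ?_ ?_ ?_ (fun k _ => rfl)
    · intro k hk
      rw [Finset.mem_erase] at hk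
      exact Finset.mem_erase.mpr ⟨fun h => hk.1 (Fin.val_injective h), Finset.mem_range.mpr k.isLt⟩
    · intro x hx y hy hxy
      exact Fin.ext hxy
    · intro x hx
      simp only [Finset.coe_erase, Set.mem_diff, Finset.mem_coe, mem_range,
        Set.mem_singleton_iff] at hx ⊢
      refine ⟨⟨x, hx.1⟩, ?_, rfl⟩
      simp only [Finset.coe_erase, Set.mem_diff, Finset.mem_coe, Finset.mem_univ,
        Set.mem_singleton_iff, true_and]
      intro h
      exact hx.2 (by rw [← h])
  have haj : a j = (N : ℚ) / (D : ℚ) := by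
    simp only [ha, Lagrange.basis, eval_prod]
    have : ∀ k ∈ (Finset.univ : Finset (Fin (n+1))).erase j,
        (Lagrange.basisDivisor (v j) (v k)).eval (m : ℚ)
          = ((m : ℚ) - v k) / (v j - v k) := by
      intro k hk
      unfold Lagrange.basisDivisor
      rw [eval_mul, eval_C, eval_sub, eval_X, eval_C]
      rw [inv_mul_eq_div]
    rw [Finset.prod_congr rfl this]
    rw [Finset.prod_div_distrib]
    have h1 : ∏ k ∈ (Finset.univ : Finset (Fin (n+1))).erase j, ((m : ℚ) - v k) = (N : ℚ) := by
      rw [hN]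
      push_cast
      exact hbij (fun k => (m : ℚ) - (k : ℚ))
    have h2 : ∏ k ∈ (Finset.univ : Finset (Fin (n+1))).erase j, (v j - v k) = (D : ℚ) := by
      rw [hD]
      push_cast
      exact hbij (fun k => ((j : ℕ) : ℚ) - (k : ℚ))
    rw [h1, h2]
  rw [haj]
  rw [Int.cast_div_charZero hdvd]
end
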